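/- arXiv:1111.6179 — 3 statements merged into one kernel-verified Lean document; each statement's English description precedes it below -/
import Mathlib

section
/- Let ℓ ≥ 1 and k ≥ 1 be integers, let G be a graph on a finite vertex set V, let W ⊆ V with |W| ≤ ℓ, and let G′ be obtained from G by adding an arbitrary set of edges each having both endpoints in W. For a graph H on V, let N_k(H) denote the number of vertices of H lying in connected components of size exactly k. Then |N_k(G′) − N_k(G)| ≤ ℓk. -/
/-- The number of vertices in the connected component of `x` in the graph `G`. -/
noncomputable def compSize {V : Type*} (G : SimpleGraph V) (x : V) : ℕ :=
  Set.ncard {y | G.Reachable x y}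

/-- The number of vertices of `G` lying in connected components of size exactly `k`. -/
noncomputable def NVert {V : Type*} (G : SimpleGraph V) (k : ℕ) : ℕ :=
  Set.ncard {x | compSize G x = k}

/-! Let `S` be the set of vertices that reach `W` in `G'`. Outside `S`, a walk in `G'` never uses
a new edge, so components of `G` and `G'` agree there and the two counts differ only inside `S`.
In both graphs every vertex of `S` reaches `W`, so the vertices of `S` in components of size `k`
lie in the at most `ℓ` components meeting `W`, which contain at most `ℓ k` such vertices. -/

namespace SimpleGraph

variable {V : Type*}

lemma Reachable.compSize_eq {H : SimpleGraph V} {x y : V} (h : H.Reachable x y) :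
    compSize H x = compSize H y := by
  unfold compSize
  congr 1
  ext z
  exact ⟨h.symm.trans, h.trans⟩

lemma ncard_compSize_eq_inter_reachable_le [Finite V] (H : SimpleGraph V) (W : Finset V)
    (k : ℕ) : ({x | compSize H x = k} ∩ {x | ∃ w ∈ W, H.Reachable x w}).ncard ≤ W.card * k := by
  have hcomp (w : V) : ({y | H.Reachable w y} ∩ {x | compSize H x = k}).ncard ≤ k := by
    obtain ⟨x, hwx, hx⟩ | hempty :=
      ({y | H.Reachable w y} ∩ {x | compSize H x = k}).eq_empty_or_nonempty.symm
    · calc _ ≤ {y | H.Reachable w y}.ncard := Set.ncard_le_ncard Set.inter_subset_left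
        _ = k := hwx.compSize_eq.trans hx
    · simp [hempty]
  calc _ ≤ (⋃ w ∈ W, {y | H.Reachable w y} ∩ {x | compSize H x = k}).ncard := by
        refine Set.ncard_le_ncard ?_
        rintro x ⟨hx, w, hw, hxw⟩
        exact Set.mem_biUnion hw ⟨hxw.symm, hx⟩
    _ ≤ ∑ w ∈ W, ({y | H.Reachable w y} ∩ {x | compSize H x = k}).ncard :=
        W.set_ncard_biUnion_le _
    _ ≤ W.card * k := by simpa using Finset.sum_le_sum fun w _ => hcomp w

section AddEdgesInside

variable {G G' : SimpleGraph V} {W : Finset V}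

lemma Walk.reachable_or_exists_mem_reachable
    (hadd : ∀ x y : V, G'.Adj x y → G.Adj x y ∨ (x ∈ W ∧ y ∈ W)) {x y : V} (p : G'.Walk x y) :
    G.Reachable x y ∨ ∃ w ∈ W, G.Reachable x w := by
  induction p with
  | nil => exact .inl .rfl
  | @cons x v y hxv _ ih =>
    rcases hadd x v hxv with hG | ⟨hx, -⟩
    · exact ih.imp hG.reachable.trans fun ⟨w, hw, hvw⟩ => ⟨w, hw, hG.reachable.trans hvw⟩
    · exact .inr ⟨x, hx, .rfl⟩

lemma compSize_eq_of_not_reachable (hle : G ≤ G')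
    (hadd : ∀ x y : V, G'.Adj x y → G.Adj x y ∨ (x ∈ W ∧ y ∈ W)) {x : V}
    (hx : ¬∃ w ∈ W, G'.Reachable x w) : compSize G x = compSize G' x := by
  unfold compSize
  congr 1
  ext y
  refine ⟨fun h => h.mono hle, fun ⟨p⟩ => ?_⟩
  refine (p.reachable_or_exists_mem_reachable hadd).resolve_right ?_
  rintro ⟨w, hw, hxw⟩
  exact hx ⟨w, hw, hxw.mono hle⟩

lemma exists_mem_reachable_of_reachable
    (hadd : ∀ x y : V, G'.Adj x y → G.Adj x y ∨ (x ∈ W ∧ y ∈ W)) {x : V}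
    (hx : ∃ w ∈ W, G'.Reachable x w) : ∃ w ∈ W, G.Reachable x w := by
  obtain ⟨w, hw, ⟨p⟩⟩ := hx
  exact (p.reachable_or_exists_mem_reachable hadd).elim (fun h => ⟨w, hw, h⟩) id

end AddEdgesInside

end SimpleGraph

lemma Set.abs_ncard_sub_le_of_sdiff_eq {α : Type*} [Finite α] {A A' S : Set α} {m : ℕ}
    (hsdiff : A' \ S = A \ S) (hA' : (A' ∩ S).ncard ≤ m) (hA : (A ∩ S).ncard ≤ m) :
    |(A'.ncard : ℤ) - A.ncard| ≤ m := by
  rw [← Set.ncard_inter_add_ncard_sdiff_eq_ncard A' S,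
    ← Set.ncard_inter_add_ncard_sdiff_eq_ncard A S, hsdiff, abs_le]
  omega

theorem nvert_change_le_general (ℓ k : ℕ)
    (V : Type) [Fintype V] (G G' : SimpleGraph V) (W : Finset V) (hW : W.card ≤ ℓ)
    (hle : G ≤ G')
    (hadd : ∀ x y : V, G'.Adj x y → G.Adj x y ∨ (x ∈ W ∧ y ∈ W)) :
    |(NVert G' k : ℤ) - (NVert G k : ℤ)| ≤ (ℓ : ℤ) * k := by
  set S : Set V := {x | ∃ w ∈ W, G'.Reachable x w}
  have hWk : W.card * k ≤ ℓ * k := Nat.mul_le_mul_right k hW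
  have hsdiff : {x | compSize G' x = k} \ S = {x | compSize G x = k} \ S := by
    ext x
    simp only [Set.mem_sdiff, Set.mem_ofPred_eq, and_congr_left_iff]
    intro hx
    rw [SimpleGraph.compSize_eq_of_not_reachable hle hadd hx]
  have hG'S : ({x | compSize G' x = k} ∩ S).ncard ≤ ℓ * k :=
    (G'.ncard_compSize_eq_inter_reachable_le W k).trans hWk
  have hGS : ({x | compSize G x = k} ∩ S).ncard ≤ ℓ * k :=
    (Set.ncard_le_ncard (Set.inter_subset_inter_right _
      fun _ => SimpleGraph.exists_mem_reachable_of_reachable hadd)).trans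
      ((G.ncard_compSize_eq_inter_reachable_le W k).trans hWk)
  exact_mod_cast Set.abs_ncard_sub_le_of_sdiff_eq hsdiff hG'S hGS

/-- if `G'` is obtained from a graph `G` on a finite vertex set by adding
edges whose endpoints all lie in a set `W` of at most `ℓ` vertices, then the number of
vertices in components of size exactly `k` changes by at most `ℓ·k`. -/
theorem nvert_change_le (ℓ k : ℕ) (hℓ : 1 ≤ ℓ) (hk : 1 ≤ k)
    (V : Type) [Fintype V] (G G' : SimpleGraph V) (W : Finset V) (hW : W.card ≤ ℓ)
    (hle : G ≤ G')
    (hadd : ∀ x y : V, G'.Adj x y → G.Adj x y ∨ (x ∈ W ∧ y ∈ W)) :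
    |(NVert G' k : ℤ) - (NVert G k : ℤ)| ≤ (ℓ : ℤ) * k :=
  nvert_change_le_general ℓ k V G G' W hW hle hadd
end

section
/- Let N ⊆ ℕ be infinite and for each n ∈ N let G_n be a graph on n vertices. For k ≥ 1 let N_k(G_n) denote the number of vertices of G_n lying in connected components of size exactly k, and let L_1(G_n) denote the number of vertices in a largest connected component of G_n. Suppose there exist ρ_k ∈ [0,1] with Σ_{k≥1} ρ_k = 1 such that, for every k ≥ 1, N_k(G_n)/n → ρ_k as n → ∞ along N. Then L_1(G_n)/n → 0 as n → ∞ along N. -/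
open Filter

/-- The number of vertices in a largest connected component of `G`. -/
noncomputable def L1 {V : Type*} [Fintype V] (G : SimpleGraph V) : ℕ :=
  Finset.univ.sup fun x => compSize G x

/-!
A largest component of size `L₁ > K` is disjoint from the vertices in components of size at
most `K`, so `L₁ + ∑_{k ≤ K} N_k ≤ K + n` for every `K`. Dividing by `n` and letting `n → ∞`
gives `limsup L₁/n ≤ 1 - ∑_{k ≤ K} ρ_k`, which tends to `0` as `K → ∞`.
-/

open Finset

namespace SimpleGraph

variable {V : Type*} (G : SimpleGraph V)

lemma compSize_eq_of_reachable {x y : V} (h : G.Reachable x y) :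
    compSize G x = compSize G y := by
  unfold compSize
  congr 1
  ext z
  exact ⟨h.symm.trans, h.trans⟩

lemma compSize_le_NVert [Finite V] (x : V) : compSize G x ≤ NVert G (compSize G x) :=
  Set.ncard_le_ncard (fun _ hy => (G.compSize_eq_of_reachable hy).symm) (Set.toFinite _)

variable [Fintype V]

lemma NVert_eq_card_filter (k : ℕ) : NVert G k = #{x | compSize G x = k} := by
  rw [NVert, ← Set.ncard_coe_finset, coe_filter]
  simp only [mem_univ, true_and]

lemma sum_NVert_le_card (s : Finset ℕ) : ∑ k ∈ s, NVert G k ≤ Fintype.card V := by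
  simp_rw [NVert_eq_card_filter, sum_card_fiberwise_eq_card_filter]
  exact card_le_univ _

lemma L1_le_NVert_L1 : L1 G ≤ NVert G (L1 G) := by
  cases isEmpty_or_nonempty V
  · simp [L1]
  · obtain ⟨x, -, hx⟩ := exists_mem_eq_sup univ univ_nonempty (compSize G)
    rw [L1, hx]
    exact G.compSize_le_NVert x

lemma L1_add_sum_NVert_le (K : ℕ) :
    L1 G + ∑ k ∈ range K, NVert G (k + 1) ≤ K + Fintype.card V := by
  have hshift : ∑ k ∈ range K, NVert G (k + 1) ≤ ∑ k ∈ range (K + 1), NVert G k := by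
    rw [sum_range_succ']
    exact Nat.le_add_right _ _
  by_cases hL : L1 G ≤ K
  · have := G.sum_NVert_le_card (range (K + 1))
    omega
  · have hnotin : L1 G ∉ range (K + 1) := by simpa using hL
    have := G.sum_NVert_le_card (insert (L1 G) (range (K + 1)))
    rw [sum_insert hnotin] at this
    have := G.L1_le_NVert_L1
    omega

lemma L1_div_card_le (K : ℕ) :
    (L1 G : ℝ) / Fintype.card V ≤
      K / Fintype.card V + (1 - ∑ k ∈ range K, (NVert G (k + 1) : ℝ) / Fintype.card V) := by
  rcases (Fintype.card V).eq_zero_or_pos with hV | hV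
  · simp [hV]
  · have hV' : (0 : ℝ) < Fintype.card V := by exact_mod_cast hV
    have h : (L1 G : ℝ) + ∑ k ∈ range K, (NVert G (k + 1) : ℝ) ≤ K + Fintype.card V := by
      exact_mod_cast G.L1_add_sum_NVert_le K
    rw [← sum_div, one_sub_div hV'.ne', ← add_div, div_le_div_iff_of_pos_right hV']
    linarith

end SimpleGraph

theorem no_giant_of_converging_proportions_general (N : Set ℕ)
    (G : ∀ n : ℕ, SimpleGraph (Fin n)) (rho : ℕ → ℝ)
    (hsum : HasSum (fun k : ℕ => rho (k + 1)) 1)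
    (hconv : ∀ k, 1 ≤ k →
      Tendsto (fun n : ℕ => (NVert (G n) k : ℝ) / n) (atTop ⊓ 𝓟 N) (nhds (rho k))) :
    Tendsto (fun n : ℕ => (L1 (G n) : ℝ) / n) (atTop ⊓ 𝓟 N) (nhds 0) := by
  refine tendsto_order.2 ⟨fun a ha => Eventually.of_forall fun n => ha.trans_le (by positivity),
    fun ε hε => ?_⟩
  obtain ⟨K, hK⟩ := (hsum.tendsto_sum_nat.eventually (eventually_gt_nhds (sub_lt_self 1 hε))).exists
  have hbound : Tendsto
      (fun n : ℕ => (K : ℝ) / n + (1 - ∑ k ∈ range K, (NVert (G n) (k + 1) : ℝ) / n))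
      (atTop ⊓ 𝓟 N) (nhds (0 + (1 - ∑ k ∈ range K, rho (k + 1)))) :=
    ((tendsto_const_div_atTop_nhds_zero_nat (K : ℝ)).mono_left inf_le_left).add
      (tendsto_const_nhds.sub (tendsto_finsetSum _ fun k _ => hconv (k + 1) k.succ_pos))
  filter_upwards [hbound.eventually (eventually_lt_nhds (show _ < ε by linarith))] with n hn
  have hle := (G n).L1_div_card_le K
  rw [Fintype.card_fin] at hle
  exact hle.trans_lt hn

/-- if, along an infinite set `N` of values of `n`, the proportions
`N_k(G_n)/n` converge to constants `ρ_k ∈ [0,1]` with `Σ_{k ≥ 1} ρ_k = 1`, then the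
rescaled size `L_1(G_n)/n` of the largest component tends to `0` along `N`. -/
theorem no_giant_of_converging_proportions (N : Set ℕ) (hN : N.Infinite)
    (G : ∀ n : ℕ, SimpleGraph (Fin n)) (rho : ℕ → ℝ)
    (hrange : ∀ k, 1 ≤ k → rho k ∈ Set.Icc (0 : ℝ) 1)
    (hsum : HasSum (fun k : ℕ => rho (k + 1)) 1)
    (hconv : ∀ k, 1 ≤ k →
      Tendsto (fun n : ℕ => (NVert (G n) k : ℝ) / n) (atTop ⊓ 𝓟 N) (nhds (rho k))) :
    Tendsto (fun n : ℕ => (L1 (G n) : ℝ) / n) (atTop ⊓ 𝓟 N) (nhds 0) :=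
  no_giant_of_converging_proportions_general N G rho hsum hconv
end

section
/- Consider the system of differential equations ρ_k′(t) = −2k ρ_k(t) + k Σ_{c_1+c_2=k} ρ_{c_1}(t) ρ_{c_2}(t) for all k ≥ 1 and t ≥ 0 (the sum being over ordered pairs (c_1,c_2) of positive integers with c_1 + c_2 = k; right-derivative at t = 0), for differentiable functions ρ_k : [0,∞) → [0,1] with 0 ≤ Σ_{k≥1} ρ_k(t) ≤ 1 for all t, subject to the initial conditions ρ_1(0) = 1 and ρ_k(0) = 0 for k ≥ 2. This system has at most one solution: if (ρ_k)_{k≥1} and (σ_k)_{k≥1} are both solutions on [0,∞), then ρ_k(t) = σ_k(t) for all k ≥ 1 and t ≥ 0. -/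
/-! The equation for `ρ_k` only involves `ρ_1, …, ρ_k`, and it is linear in `ρ_k` once the
lower components are known. Arguing by strong induction on `k`, the difference of two solutions
in the `k`-th component therefore satisfies `d' = -2k d` with `d 0 = 0`, and Grönwall's
inequality forces `d = 0`. -/

/-- A solution of the system of differential equations associated to the Erdős–Rényi
random graph process (Smoluchowski coagulation equations with sol-gel interaction):
functions `ρ_k : [0,∞) → [0,1]` with `0 ≤ Σ_{k≥1} ρ_k(t) ≤ 1`, satisfying
`ρ_k'(t) = -2k ρ_k(t) + k Σ_{c₁+c₂=k} ρ_{c₁}(t) ρ_{c₂}(t)` for all `k ≥ 1` and `t ≥ 0`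
(right-derivative at `t = 0`), with `ρ_1(0) = 1` and `ρ_k(0) = 0` for `k ≥ 2`. -/
structure ERSolution (rho : ℕ → ℝ → ℝ) : Prop where
  mem_Icc : ∀ k, 1 ≤ k → ∀ t : ℝ, 0 ≤ t → rho k t ∈ Set.Icc (0 : ℝ) 1
  sum_mem_Icc : ∀ t : ℝ, 0 ≤ t → (∑' k : ℕ, rho (k + 1) t) ∈ Set.Icc (0 : ℝ) 1
  hasDeriv : ∀ k, 1 ≤ k → ∀ t : ℝ, 0 < t →
    HasDerivAt (rho k)
      (-(2 * k) * rho k t + k * ∑ c ∈ Finset.Ioo 0 k, rho c t * rho (k - c) t) t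
  hasDeriv_zero : ∀ k, 1 ≤ k →
    HasDerivWithinAt (rho k)
      (-(2 * k) * rho k 0 + k * ∑ c ∈ Finset.Ioo 0 k, rho c 0 * rho (k - c) 0)
      (Set.Ici (0 : ℝ)) 0
  init_one : rho 1 0 = 1
  init_zero : ∀ k, 2 ≤ k → rho k 0 = 0

open Set

theorem eq_zero_of_hasDerivWithinAt_Ici_smul_self {E : Type*} [NormedAddCommGroup E]
    [NormedSpace ℝ E] {f : ℝ → E} {a t₀ : ℝ}
    (hf : ∀ x, t₀ ≤ x → HasDerivWithinAt f (a • f x) (Ici t₀) x) (h₀ : f t₀ = 0)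
    {t : ℝ} (ht : t₀ ≤ t) : f t = 0 := by
  refine eq_zero_of_abs_deriv_le_mul_abs_self_of_eq_zero_right (K := ‖a‖)
    (fun x hx => (hf x hx.1).continuousWithinAt.mono Icc_subset_Ici_self)
    (fun x hx => (hf x hx.1).mono (Ici_subset_Ici.2 hx.1)) h₀
    (fun x _ => (norm_smul a (f x)).le) t ⟨ht, le_rfl⟩

namespace ERSolution

variable {rho sigma : ℕ → ℝ → ℝ}

theorem hasDerivWithinAt_Ici (h : ERSolution rho) {k : ℕ} (hk : 1 ≤ k) {t : ℝ} (ht : 0 ≤ t) :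
    HasDerivWithinAt (rho k)
      (-(2 * k) * rho k t + k * ∑ c ∈ Finset.Ioo 0 k, rho c t * rho (k - c) t) (Ici 0) t := by
  rcases ht.eq_or_lt with rfl | ht
  · exact h.hasDeriv_zero k hk
  · exact (h.hasDeriv k hk t ht).hasDerivWithinAt

theorem apply_zero_eq (hrho : ERSolution rho) (hsigma : ERSolution sigma) {k : ℕ}
    (hk : 1 ≤ k) : rho k 0 = sigma k 0 := by
  rcases hk.eq_or_lt with rfl | hk
  · rw [hrho.init_one, hsigma.init_one]
  · rw [hrho.init_zero k hk, hsigma.init_zero k hk]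

theorem eq_of_forall_lt_eq (hrho : ERSolution rho) (hsigma : ERSolution sigma) {k : ℕ}
    (hk : 1 ≤ k) (hlt : ∀ c < k, 1 ≤ c → ∀ t, 0 ≤ t → rho c t = sigma c t)
    {t : ℝ} (ht : 0 ≤ t) : rho k t = sigma k t := by
  have hconv : ∀ s, 0 ≤ s → ∑ c ∈ Finset.Ioo 0 k, rho c s * rho (k - c) s
      = ∑ c ∈ Finset.Ioo 0 k, sigma c s * sigma (k - c) s := fun s hs =>
    Finset.sum_congr rfl fun c hc => by
      rw [Finset.mem_Ioo] at hc
      rw [hlt c hc.2 hc.1 s hs, hlt (k - c) (by omega) (by omega) s hs]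
  have hdiff : ∀ x, 0 ≤ x → HasDerivWithinAt (fun s => rho k s - sigma k s)
      (-(2 * k : ℝ) • (rho k x - sigma k x)) (Ici 0) x := fun x hx =>
    ((hrho.hasDerivWithinAt_Ici hk hx).sub (hsigma.hasDerivWithinAt_Ici hk hx)).congr_deriv
      (by rw [hconv x hx, smul_eq_mul]; ring)
  exact sub_eq_zero.1 <| eq_zero_of_hasDerivWithinAt_Ici_smul_self hdiff
    (sub_eq_zero.2 (hrho.apply_zero_eq hsigma hk)) ht

end ERSolution

/-- the Erdős–Rényi system of differential equations has at most one
solution on `[0,∞)`. -/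
theorem er_system_unique (rho sigma : ℕ → ℝ → ℝ)
    (hrho : ERSolution rho) (hsigma : ERSolution sigma) :
    ∀ k, 1 ≤ k → ∀ t : ℝ, 0 ≤ t → rho k t = sigma k t := by
  intro k
  induction k using Nat.strong_induction_on with
  | _ k ih => exact fun hk t ht => hrho.eq_of_forall_lt_eq hsigma hk ih ht
end
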